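/- There exists a constant C > 0 such that the following holds. Let H be a real Hilbert space, let T > 0, let N ≥ 2 be an integer, set Δt := T/N and t_n := n·Δt for n = 0, …, N, and let w : ℝ → H be twice continuously differentiable. Then Δt · Σ_{n=1}^{N−1} ‖ (1/2)w(t_{n+1}) − w(t_n) + (1/2)w(t_{n−1}) ‖² ≤ C Δt⁴ ∫_0^T ‖w''(s)‖² ds. -/

import Mathlib

/-!
The residual is half the second difference `w (t + Δ) - 2 • w t + w (t - Δ) = φ t - φ (t - Δ)`,
where `φ s = w (s + Δ) - w s`. Since `‖φ' s‖ = ‖w' (s + Δ) - w' s‖ ≤ ∫ ‖w''‖` over the window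
`[t - Δ, t + Δ]`, the mean value inequality bounds the second difference by `Δ` times that
integral, and Cauchy–Schwarz bounds its square by `2 Δ³ ∫ ‖w''‖²` over the window. Every cell
`[t_k, t_{k+1}]` lies in at most two windows `[t_{n-1}, t_{n+1}]`, so summing gives the estimate
with `C = 1`.
-/

open intervalIntegral Finset
open MeasureTheory (volume)

lemma sq_intervalIntegral_le {f : ℝ → ℝ} {a b : ℝ} (hab : a ≤ b)
    (hf : IntervalIntegrable f volume a b) (hf2 : IntervalIntegrable (fun x ↦ f x ^ 2) volume a b) :
    (∫ x in a..b, f x) ^ 2 ≤ (b - a) * ∫ x in a..b, f x ^ 2 := by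
  set I := ∫ x in a..b, f x
  set J := ∫ x in a..b, f x ^ 2
  have hvar : 0 ≤ ∫ x in a..b, ((b - a) * f x - I) ^ 2 :=
    integral_nonneg hab fun x _ ↦ sq_nonneg _
  have hexpand : ∫ x in a..b, ((b - a) * f x - I) ^ 2 = (b - a) * ((b - a) * J - I ^ 2) := by
    have hpt : ∀ x, ((b - a) * f x - I) ^ 2 =
        (b - a) ^ 2 * f x ^ 2 - 2 * (b - a) * I * f x + I ^ 2 := fun x ↦ by ring
    simp_rw [hpt]
    rw [integral_add ((hf2.const_mul _).sub (hf.const_mul _)) intervalIntegrable_const,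
      integral_sub (hf2.const_mul _) (hf.const_mul _), integral_const_mul, integral_const_mul,
      integral_const, smul_eq_mul]
    ring
  rcases hab.eq_or_lt with rfl | hlt
  · simp [I]
  · nlinarith

section SecondDifference

variable {E : Type*} [NormedAddCommGroup E] [NormedSpace ℝ E] {w : ℝ → E}

lemma norm_deriv_sub_le_integral (hw : ContDiff ℝ 2 w) {a b : ℝ} (hab : a ≤ b) :
    ‖deriv w b - deriv w a‖ ≤ ∫ s in a..b, ‖iteratedDeriv 2 w s‖ := by
  have hw' : ContDiff ℝ 1 (deriv w) := hw.iterate_deriv' 1 1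
  rw [iteratedDeriv_succ, iteratedDeriv_one]
  exact norm_sub_le_integral_of_norm_deriv_le_of_le hab hw'.continuous.continuousOn
    (hw'.differentiable one_ne_zero).differentiableOn (Filter.Eventually.of_forall fun _ _ ↦ le_rfl)
    ((hw'.continuous_deriv le_rfl).norm.intervalIntegrable _ _)

lemma norm_second_difference_le (hw : ContDiff ℝ 2 w) {Δ : ℝ} (hΔ : 0 ≤ Δ) (t : ℝ) :
    ‖w (t + Δ) - 2 • w t + w (t - Δ)‖ ≤ Δ * ∫ s in t - Δ..t + Δ, ‖iteratedDeriv 2 w s‖ := by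
  have hdiff : Differentiable ℝ w := hw.differentiable (by norm_num)
  set φ : ℝ → E := fun s ↦ w (s + Δ) - w s
  have hφ : ∀ s, HasDerivAt φ (deriv w (s + Δ) - deriv w s) s := fun s ↦
    ((hdiff _).hasDerivAt.comp_add_const s Δ).sub (hdiff s).hasDerivAt
  have hbound : ∀ s ∈ Set.Ico (t - Δ) t,
      ‖deriv w (s + Δ) - deriv w s‖ ≤ ∫ u in t - Δ..t + Δ, ‖iteratedDeriv 2 w u‖ := by
    intro s hs
    refine (norm_deriv_sub_le_integral hw (by linarith)).trans ?_
    refine integral_mono_interval hs.1 (by linarith) (by linarith [hs.2])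
      (Filter.Eventually.of_forall fun _ ↦ norm_nonneg _) ?_
    exact (hw.continuous_iteratedDeriv 2 le_rfl).norm.intervalIntegrable _ _
  have hmvt := norm_image_sub_le_of_norm_deriv_le_segment' (fun s _ ↦ (hφ s).hasDerivWithinAt)
    hbound t ⟨by linarith, le_rfl⟩
  have hφt : φ t - φ (t - Δ) = w (t + Δ) - 2 • w t + w (t - Δ) := by
    simp only [φ, sub_add_cancel]
    module
  rw [hφt, sub_sub_cancel] at hmvt
  linarith

lemma sq_norm_filter_residual_le (hw : ContDiff ℝ 2 w) {Δ : ℝ} (hΔ : 0 ≤ Δ) (t : ℝ) :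
    ‖(1/2 : ℝ) • w (t + Δ) - w t + (1/2 : ℝ) • w (t - Δ)‖ ^ 2 ≤
      Δ ^ 3 / 2 * ∫ s in t - Δ..t + Δ, ‖iteratedDeriv 2 w s‖ ^ 2 := by
  have hg : Continuous fun s ↦ ‖iteratedDeriv 2 w s‖ :=
    (hw.continuous_iteratedDeriv 2 le_rfl).norm
  have hhalf : (1/2 : ℝ) • w (t + Δ) - w t + (1/2 : ℝ) • w (t - Δ) =
      (1/2 : ℝ) • (w (t + Δ) - 2 • w t + w (t - Δ)) := by module
  have hcs := sq_intervalIntegral_le (by linarith : t - Δ ≤ t + Δ) (hg.intervalIntegrable _ _)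
    ((hg.pow 2).intervalIntegrable _ _)
  rw [hhalf, norm_smul, Real.norm_of_nonneg (by norm_num)]
  calc (1/2 * ‖w (t + Δ) - 2 • w t + w (t - Δ)‖) ^ 2
      ≤ (1/2 * (Δ * ∫ s in t - Δ..t + Δ, ‖iteratedDeriv 2 w s‖)) ^ 2 := by
        gcongr; exact norm_second_difference_le hw hΔ t
    _ = Δ ^ 2 / 4 * (∫ s in t - Δ..t + Δ, ‖iteratedDeriv 2 w s‖) ^ 2 := by ring
    _ ≤ Δ ^ 2 / 4 * ((t + Δ - (t - Δ)) * ∫ s in t - Δ..t + Δ, ‖iteratedDeriv 2 w s‖ ^ 2) :=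
        mul_le_mul_of_nonneg_left hcs (by positivity)
    _ = Δ ^ 3 / 2 * ∫ s in t - Δ..t + Δ, ‖iteratedDeriv 2 w s‖ ^ 2 := by ring

end SecondDifference

lemma sum_Icc_pred_add_le {I : ℕ → ℝ} (hI : ∀ k, 0 ≤ I k) (N : ℕ) :
    ∑ n ∈ Icc 1 (N - 1), (I (n - 1) + I n) ≤ 2 * ∑ k ∈ range N, I k := by
  have hIcc : Icc 1 (N - 1) = Ico 1 N := by
    ext n; simp only [mem_Icc, mem_Ico]; omega
  have hleft : ∑ n ∈ Icc 1 (N - 1), I (n - 1) ≤ ∑ k ∈ range N, I k := by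
    rw [hIcc, sum_Ico_eq_sum_range]
    simp only [add_tsub_cancel_left]
    exact sum_le_sum_of_subset_of_nonneg (range_subset_range.2 (Nat.sub_le N 1))
      fun k _ _ ↦ hI k
  have hright : ∑ n ∈ Icc 1 (N - 1), I n ≤ ∑ k ∈ range N, I k :=
    sum_le_sum_of_subset_of_nonneg (by intro n; simp only [mem_Icc, mem_range]; omega)
      fun k _ _ ↦ hI k
  rw [sum_add_distrib]
  linarith

lemma sum_integral_overlapping_cells_le {f : ℝ → ℝ} (hf0 : ∀ x, 0 ≤ f x)
    (hf : ∀ a b, IntervalIntegrable f volume a b) {Δ : ℝ} (hΔ : 0 ≤ Δ) (N : ℕ) :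
    ∑ n ∈ Icc 1 (N - 1), ∫ s in n * Δ - Δ..n * Δ + Δ, f s ≤ 2 * ∫ s in 0..N * Δ, f s := by
  set I : ℕ → ℝ := fun k ↦ ∫ s in k * Δ..(k + 1 : ℕ) * Δ, f s
  have hcell : ∀ n ∈ Icc 1 (N - 1), ∫ s in n * Δ - Δ..n * Δ + Δ, f s = I (n - 1) + I n := by
    intro n hn
    have hn1 : ((n - 1 : ℕ) : ℝ) = n - 1 := by rw [Nat.cast_sub (mem_Icc.1 hn).1, Nat.cast_one]
    simp only [I, hn1, Nat.cast_add, Nat.cast_one, sub_add_cancel]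
    rw [integral_add_adjacent_intervals (hf _ _) (hf _ _)]
    congr 1 <;> ring_nf
  have hI : ∀ k, 0 ≤ I k := fun k ↦
    integral_nonneg (by gcongr; simp) fun x _ ↦ hf0 x
  have htotal : ∑ k ∈ range N, I k = ∫ s in 0..N * Δ, f s := by
    simpa only [Nat.cast_zero, zero_mul] using
      sum_integral_adjacent_intervals (a := fun k : ℕ ↦ (k : ℝ) * Δ) (n := N) fun k _ ↦ hf _ _
  rw [sum_congr rfl hcell, ← htotal]
  exact sum_Icc_pred_add_le hI N

/-- Summed second-order consistency estimate for the time filter residual. -/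
theorem filter_residual_summed_bound :
    ∃ C : ℝ, 0 < C ∧
      ∀ (H : Type) (_ : NormedAddCommGroup H) (_ : InnerProductSpace ℝ H)
        (_ : CompleteSpace H)
        (T : ℝ), 0 < T →
        ∀ (N : ℕ), 2 ≤ N →
        ∀ (w : ℝ → H), ContDiff ℝ 2 w →
          (T / N) * ∑ n ∈ Finset.Icc 1 (N - 1),
              ‖(1/2 : ℝ) • w ((↑(n + 1) : ℝ) * (T / N)) - w ((n : ℝ) * (T / N)) +
                  (1/2 : ℝ) • w ((↑(n - 1) : ℝ) * (T / N))‖ ^ 2 ≤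
            C * (T / N) ^ 4 * ∫ s in (0 : ℝ)..T, ‖iteratedDeriv 2 w s‖ ^ 2 := by
  refine ⟨1, one_pos, fun H _ _ _ T hT N hN w hw ↦ ?_⟩
  set Δ := T / N
  have hΔ : 0 ≤ Δ := by positivity
  have hNΔ : N * Δ = T := by
    simp only [Δ]; field_simp
  have hg : Continuous fun s ↦ ‖iteratedDeriv 2 w s‖ ^ 2 :=
    (hw.continuous_iteratedDeriv 2 le_rfl).norm.pow 2
  have hterm : ∀ n ∈ Icc 1 (N - 1),
      ‖(1/2 : ℝ) • w ((↑(n + 1) : ℝ) * Δ) - w (n * Δ) +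
          (1/2 : ℝ) • w ((↑(n - 1) : ℝ) * Δ)‖ ^ 2 ≤
        Δ ^ 3 / 2 * ∫ s in n * Δ - Δ..n * Δ + Δ, ‖iteratedDeriv 2 w s‖ ^ 2 := by
    intro n hn
    rw [Nat.cast_sub (mem_Icc.1 hn).1]
    push_cast
    simpa only [add_mul, sub_mul, one_mul] using sq_norm_filter_residual_le hw hΔ (n * Δ)
  have hsum := sum_integral_overlapping_cells_le (fun s ↦ sq_nonneg ‖iteratedDeriv 2 w s‖)
    hg.intervalIntegrable hΔ N
  rw [hNΔ] at hsum
  calc Δ * ∑ n ∈ Icc 1 (N - 1), ‖(1/2 : ℝ) • w ((↑(n + 1) : ℝ) * Δ) - w (n * Δ) +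
          (1/2 : ℝ) • w ((↑(n - 1) : ℝ) * Δ)‖ ^ 2
      ≤ Δ * ∑ n ∈ Icc 1 (N - 1),
          Δ ^ 3 / 2 * ∫ s in n * Δ - Δ..n * Δ + Δ, ‖iteratedDeriv 2 w s‖ ^ 2 := by
        gcongr with n hn; exact hterm n hn
    _ = Δ ^ 4 / 2 * ∑ n ∈ Icc 1 (N - 1),
          ∫ s in n * Δ - Δ..n * Δ + Δ, ‖iteratedDeriv 2 w s‖ ^ 2 := by
        rw [← mul_sum]; ring
    _ ≤ Δ ^ 4 / 2 * (2 * ∫ s in 0..T, ‖iteratedDeriv 2 w s‖ ^ 2) := by gcongr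
    _ = 1 * Δ ^ 4 * ∫ s in 0..T, ‖iteratedDeriv 2 w s‖ ^ 2 := by ring
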